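/- arXiv:2004.09563 — 2 statements merged into one kernel-verified Lean document; each statement's English description precedes it below -/
import Mathlib

section
/- Let x_1, …, x_n be independent random vectors in ℝ^d with common mean μ* and covariance matrices Σ_1, …, Σ_n, and let λ_(k) denote the k-th smallest value among {λ_max(Σ_i)}_{i=1}^n. Fix α with 2/3 < α ≤ 1 and set κ = 2(1−α)/α < 1. Then with probability at least 1 − 1/⌈αn⌉, the following holds simultaneously for every μ ∈ ℝ^d: if S is any subset of size ⌈αn⌉ minimizing Σ_{i∈S} ‖x_i − μ‖₂² over all subsets of size ⌈αn⌉, and μ' = (1/⌈αn⌉) Σ_{i∈S} x_i, then ‖μ' − μ*‖₂ ≤ κ·‖μ − μ*‖₂ + 2√(d·λ_(⌈αn⌉)). -/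
set_option autoImplicit false

open MeasureTheory ProbabilityTheory Finset
open scoped ENNReal NNReal

/-- The largest eigenvalue of a matrix. -/
noncomputable def lambdaMax {d : ℕ} (M : Matrix (Fin d) (Fin d) ℝ) : ℝ :=
  sSup {r : ℝ | ∃ v : Fin d → ℝ, v ≠ 0 ∧ M.mulVec v = r • v}

/-- `orderStat f k` is the `k`-th smallest (0-indexed) value among `f 0, …, f (n-1)`. -/
noncomputable def orderStat {n : ℕ} (f : Fin n → ℝ) (k : Fin n) : ℝ := f (Tuple.sort f k)

lemma ceil_pred_lt (α : ℝ) (n : ℕ) (hn : 0 < n) (hα1 : α ≤ 1) : ⌈α * (n : ℝ)⌉₊ - 1 < n := by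
  have h : ⌈α * (n : ℝ)⌉₊ ≤ n := by
    rw [Nat.ceil_le]
    calc α * (n : ℝ) ≤ 1 * (n : ℝ) := by nlinarith [Nat.cast_nonneg (α := ℝ) n]
      _ = (n : ℝ) := one_mul _
  omega

/-!
Let `I` be the `m = ⌈αn⌉` indices with the smallest `λ_max(Σ_i)`. For `i ∈ I`,
`E ‖x_i - μ*‖² = tr Σ_i ≤ d λ_(m)`, so Chebyshev's inequality for the pairwise independent
variables `‖x_i - μ*‖` gives `∑_{i ∈ I} ‖x_i - μ*‖ ≤ 2 m √(d λ_(m))` with probability at least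
`1 - 1/m`. On that event, for any `μ` and minimizing `S`, no point of `S \ I` is farther from `μ`
than a point of `I \ S`; exchanging them costs at most `2 ‖μ - μ*‖` per point in distance to `μ*`,
and there are at most `n - m ≤ (1 - α) m / α` of them. Averaging over `S` gives the bound.
-/

section Spectral

variable {d : ℕ} {M : Matrix (Fin d) (Fin d) ℝ}

lemma lambdaMax_bddAbove (M : Matrix (Fin d) (Fin d) ℝ) :
    BddAbove {r : ℝ | ∃ v : Fin d → ℝ, v ≠ 0 ∧ M.mulVec v = r • v} := by
  set A := LinearMap.toContinuousLinearMap M.mulVecLin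
  refine ⟨‖A‖, ?_⟩
  rintro r ⟨v, hv, hMv⟩
  have h : ‖r‖ * ‖v‖ ≤ ‖A‖ * ‖v‖ := by
    simpa [A, hMv, norm_smul] using A.le_opNorm v
  exact (le_abs_self r).trans (le_of_mul_le_mul_right h (norm_pos_iff.mpr hv))

lemma Matrix.IsHermitian.eigenvalues_le_lambdaMax (hM : M.IsHermitian) (i : Fin d) :
    hM.eigenvalues i ≤ lambdaMax M :=
  le_csSup (lambdaMax_bddAbove M)
    ⟨_, fun h => hM.eigenvectorBasis.orthonormal.ne_zero i
      (by simpa using congrArg (WithLp.toLp 2) h), hM.mulVec_eigenvectorBasis i⟩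

lemma Matrix.IsHermitian.trace_le_mul_lambdaMax (hM : M.IsHermitian) :
    M.trace ≤ d * lambdaMax M := by
  classical
  calc M.trace = ∑ i, hM.eigenvalues i := by simpa using hM.trace_eq_sum_eigenvalues
    _ ≤ ∑ _i : Fin d, lambdaMax M := sum_le_sum fun i _ => hM.eigenvalues_le_lambdaMax i
    _ = d * lambdaMax M := by simp

end Spectral

lemma exists_card_eq_forall_le_orderStat {n : ℕ} (f : Fin n → ℝ) (k : Fin n) :
    ∃ I : Finset (Fin n), #I = k + 1 ∧ ∀ i ∈ I, f i ≤ orderStat f k := by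
  refine ⟨(Iic k).map (Tuple.sort f).toEmbedding, by simp, ?_⟩
  simp only [mem_map_equiv, mem_Iic]
  intro i hi
  simpa [orderStat] using Tuple.monotone_sort f hi

section Trimming

variable {ι : Type*}

lemma Finset.sum_le_sum_of_card_eq_of_forall_le {M : Type*} [AddCommMonoid M] [LinearOrder M]
    [IsOrderedCancelAddMonoid M] {s t : Finset ι} {f g : ι → M} (hst : #s = #t)
    (h : ∀ i ∈ s, ∀ j ∈ t, f i ≤ g j) : ∑ i ∈ s, f i ≤ ∑ j ∈ t, g j := by
  rcases Nat.eq_zero_or_pos #t with ht | ht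
  · simp [card_eq_zero.mp ht, card_eq_zero.mp (hst.trans ht)]
  refine (nsmul_le_nsmul_iff_right ht.ne').mp ?_
  calc #t • ∑ i ∈ s, f i = ∑ i ∈ s, ∑ _j ∈ t, f i := by simp [sum_nsmul]
    _ ≤ ∑ i ∈ s, ∑ j ∈ t, g j := sum_le_sum fun i hi => sum_le_sum (h i hi)
    _ = #t • ∑ j ∈ t, g j := by rw [sum_const, hst]

lemma norm_inv_card_smul_sum_sub_le {E : Type*} [NormedAddCommGroup E] [NormedSpace ℝ E]
    {x : ι → E} {S : Finset ι} {m : ℕ} (hS : #S = m) (hm : 0 < m) (c : E) :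
    ‖(m : ℝ)⁻¹ • ∑ i ∈ S, x i - c‖ ≤ (m : ℝ)⁻¹ * ∑ i ∈ S, ‖x i - c‖ := by
  have hmR : (m : ℝ) ≠ 0 := Nat.cast_ne_zero.mpr hm.ne'
  have hc : c = (m : ℝ)⁻¹ • ∑ _i ∈ S, c := by
    rw [sum_const, hS, ← Nat.cast_smul_eq_nsmul ℝ, smul_smul, inv_mul_cancel₀ hmR, one_smul]
  calc ‖(m : ℝ)⁻¹ • ∑ i ∈ S, x i - c‖ = (m : ℝ)⁻¹ * ‖∑ i ∈ S, (x i - c)‖ := by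
        nth_rewrite 1 [hc]
        rw [← smul_sub, ← sum_sub_distrib, norm_smul, norm_inv, Real.norm_natCast]
    _ ≤ (m : ℝ)⁻¹ * ∑ i ∈ S, ‖x i - c‖ := by gcongr; exact norm_sum_le _ _

variable [DecidableEq ι]

lemma le_of_mem_of_notMem_of_sum_minimal {M : Type*} [AddCommMonoid M] [PartialOrder M]
    [IsOrderedCancelAddMonoid M] {f : ι → M} {S : Finset ι}
    (hmin : ∀ S' : Finset ι, #S' = #S → ∑ i ∈ S, f i ≤ ∑ i ∈ S', f i)
    {i j : ι} (hi : i ∈ S) (hj : j ∉ S) : f i ≤ f j := by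
  have hj' : j ∉ S.erase i := fun h => hj (mem_of_mem_erase h)
  have h := hmin (insert j (S.erase i))
    (by rw [card_insert_of_notMem hj', card_erase_add_one hi])
  rw [sum_insert hj', ← add_sum_erase S f hi] at h
  exact le_of_add_le_add_right h

lemma sum_norm_sub_le_of_sum_sq_minimal {E : Type*} [NormedAddCommGroup E] {x : ι → E} {μ : E}
    {S : Finset ι}
    (hmin : ∀ S' : Finset ι, #S' = #S → ∑ i ∈ S, ‖x i - μ‖ ^ 2 ≤ ∑ i ∈ S', ‖x i - μ‖ ^ 2)
    {I : Finset ι} (hI : #I = #S) (c : E) :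
    ∑ i ∈ S, ‖x i - c‖ ≤ ∑ i ∈ I, ‖x i - c‖ + 2 * #(S \ I) * ‖μ - c‖ := by
  have hcard : #(S \ I) = #(I \ S) := card_sdiff_comm hI.symm
  have hswap : ∑ i ∈ S \ I, (‖x i - c‖ - ‖μ - c‖) ≤ ∑ j ∈ I \ S, (‖x j - c‖ + ‖μ - c‖) := by
    refine sum_le_sum_of_card_eq_of_forall_le hcard fun i hi j hj => ?_
    rw [mem_sdiff] at hi hj
    have hij : ‖x i - μ‖ ≤ ‖x j - μ‖ :=
      (pow_le_pow_iff_left₀ (norm_nonneg _) (norm_nonneg _) two_ne_zero).mp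
        (le_of_mem_of_notMem_of_sum_minimal hmin hi.1 hj.2)
    have hi' := norm_sub_le_norm_sub_add_norm_sub (x i) μ c
    have hj' := norm_sub_le_norm_sub_add_norm_sub (x j) c μ
    rw [norm_sub_rev c μ] at hj'
    linarith
  rw [sum_sub_distrib, sum_add_distrib, sum_const, sum_const, ← hcard, nsmul_eq_mul] at hswap
  rw [← sum_inter_add_sum_sdiff S I, ← sum_inter_add_sum_sdiff I S, inter_comm]
  linarith

lemma norm_trimmedMean_sub_le {E : Type*} [NormedAddCommGroup E] [NormedSpace ℝ E] [Fintype ι]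
    {x : ι → E} {μ : E} {S I : Finset ι} {m : ℕ}
    (hm : 0 < m) (hS : #S = m)
    (hmin : ∀ S' : Finset ι, #S' = m → ∑ i ∈ S, ‖x i - μ‖ ^ 2 ≤ ∑ i ∈ S', ‖x i - μ‖ ^ 2)
    (hI : #I = m) (c : E) :
    ‖(m : ℝ)⁻¹ • ∑ i ∈ S, x i - c‖
      ≤ (m : ℝ)⁻¹ * (∑ i ∈ I, ‖x i - c‖ + 2 * (Fintype.card ι - m) * ‖μ - c‖) := by
  have hsdiff : (#(S \ I) : ℝ) ≤ Fintype.card ι - m := by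
    have hsub := card_le_card (sdiff_subset_sdiff (subset_univ I) le_rfl : I \ S ⊆ univ \ S)
    rw [card_univ_sdiff] at hsub
    have hS_le := card_le_univ S
    rw [card_sdiff_comm (hS.trans hI.symm), le_sub_iff_add_le]
    exact_mod_cast (by omega : #(I \ S) + m ≤ Fintype.card ι)
  calc ‖(m : ℝ)⁻¹ • ∑ i ∈ S, x i - c‖ ≤ (m : ℝ)⁻¹ * ∑ i ∈ S, ‖x i - c‖ :=
        norm_inv_card_smul_sum_sub_le hS hm c
    _ ≤ _ := by
        gcongr
        refine (sum_norm_sub_le_of_sum_sq_minimal (hS ▸ hmin) (hI.trans hS.symm) c).trans ?_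
        gcongr

lemma norm_trimmedMean_sub_le_of_sum_le {E : Type*} [NormedAddCommGroup E] [NormedSpace ℝ E]
    [Fintype ι] {x : ι → E} {μ c : E} {S I : Finset ι} {m : ℕ} {α r : ℝ}
    (hα : 0 < α) (hm : 0 < m) (hαm : α * Fintype.card ι ≤ m) (hS : #S = m)
    (hmin : ∀ S' : Finset ι, #S' = m → ∑ i ∈ S, ‖x i - μ‖ ^ 2 ≤ ∑ i ∈ S', ‖x i - μ‖ ^ 2)
    (hI : #I = m) (hr : ∑ i ∈ I, ‖x i - c‖ ≤ 2 * m * r) :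
    ‖(m : ℝ)⁻¹ • ∑ i ∈ S, x i - c‖ ≤ 2 * (1 - α) / α * ‖μ - c‖ + 2 * r := by
  have hmR : (0 : ℝ) < m := Nat.cast_pos.mpr hm
  have hratio : (Fintype.card ι - m) / m ≤ (1 - α) / α := by
    rw [div_le_div_iff₀ hmR hα]
    linarith
  calc ‖(m : ℝ)⁻¹ • ∑ i ∈ S, x i - c‖
      ≤ (m : ℝ)⁻¹ * (∑ i ∈ I, ‖x i - c‖ + 2 * (Fintype.card ι - m) * ‖μ - c‖) :=
        norm_trimmedMean_sub_le hm hS hmin hI c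
    _ ≤ (m : ℝ)⁻¹ * (2 * m * r + 2 * (Fintype.card ι - m) * ‖μ - c‖) := by gcongr
    _ = 2 * ((Fintype.card ι - m) / m) * ‖μ - c‖ + 2 * r := by field_simp; ring
    _ ≤ 2 * (1 - α) / α * ‖μ - c‖ + 2 * r := by
        rw [mul_div_assoc]
        gcongr

end Trimming

section Probability

variable {Ω : Type*} [MeasurableSpace Ω] {P : Measure Ω}

lemma Matrix.isHermitian_of_eq_integral_mul {ι : Type*} {f : ι → Ω → ℝ} {A : Matrix ι ι ℝ}
    (hA : ∀ j k, A j k = ∫ ω, f j ω * f k ω ∂P) : A.IsHermitian := by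
  ext j k
  simp only [Matrix.conjTranspose_apply, star_trivial, hA]
  exact integral_congr_ae (.of_forall fun ω => mul_comm _ _)

lemma integral_norm_sub_sq_eq_trace [IsFiniteMeasure P] {ι : Type*} [Fintype ι]
    {Y : Ω → EuclideanSpace ℝ ι} (hY : MemLp Y 2 P) (c : EuclideanSpace ℝ ι) {A : Matrix ι ι ℝ}
    (hA : ∀ j, A j j = ∫ ω, (Y ω j - c j) * (Y ω j - c j) ∂P) :
    ∫ ω, ‖Y ω - c‖ ^ 2 ∂P = A.trace := by
  have hcoord (j : ι) : MemLp (fun ω => Y ω j - c j) 2 P :=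
    (EuclideanSpace.proj (𝕜 := ℝ) j).comp_memLp' (hY.sub (memLp_const c))
  simp_rw [EuclideanSpace.norm_sq_eq, Real.norm_eq_abs, sq_abs, WithLp.ofLp_sub, Pi.sub_apply]
  rw [integral_finsetSum _ fun j _ => (hcoord j).integrable_sq]
  simp [Matrix.trace, hA, sq]

lemma ae_eq_zero_of_integral_sq_nonpos {f : Ω → ℝ} (hf : MemLp f 2 P)
    (h : ∫ ω, f ω ^ 2 ∂P ≤ 0) : ∀ᵐ ω ∂P, f ω = 0 := by
  have h0 := le_antisymm h (integral_nonneg fun ω => sq_nonneg (f ω))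
  have hsq := (integral_eq_zero_iff_of_nonneg (fun ω => sq_nonneg (f ω)) hf.integrable_sq).mp h0
  filter_upwards [hsq] with ω hω
  exact pow_eq_zero_iff two_ne_zero |>.mp hω

variable [IsProbabilityMeasure P]

lemma one_sub_le_measure_of_measure_compl_le {s : Set Ω} {ε : ℝ≥0∞} (h : P sᶜ ≤ ε) :
    1 - ε ≤ P s := by
  rw [tsub_le_iff_right, ← measure_univ (μ := P)]
  exact (measure_univ_le_add_compl s).trans (by gcongr)

lemma integral_le_sqrt_integral_sq {f : Ω → ℝ} (hf : MemLp f 2 P) :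
    ∫ ω, f ω ∂P ≤ √(∫ ω, f ω ^ 2 ∂P) := by
  have h := variance_nonneg f P
  rw [variance_eq_sub hf] at h
  exact (le_abs_self _).trans (Real.abs_le_sqrt (by simpa using h))

variable {ι : Type*} {a : ι → Ω → ℝ} {I : Finset ι} {v : ℝ}

lemma integral_sum_le_card_mul_sqrt (hL2 : ∀ i ∈ I, MemLp (a i) 2 P)
    (hv : ∀ i ∈ I, ∫ ω, a i ω ^ 2 ∂P ≤ v) :
    ∫ ω, (∑ i ∈ I, a i) ω ∂P ≤ #I * √v := by
  simp_rw [Finset.sum_apply]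
  rw [integral_finsetSum _ fun i hi => (hL2 i hi).integrable one_le_two]
  calc ∑ i ∈ I, ∫ ω, a i ω ∂P ≤ ∑ _i ∈ I, √v := sum_le_sum fun i hi =>
        (integral_le_sqrt_integral_sq (hL2 i hi)).trans (Real.sqrt_le_sqrt (hv i hi))
    _ = #I * √v := by simp

lemma variance_sum_le_card_mul (hindep : (I : Set ι).Pairwise fun i j => IndepFun (a i) (a j) P)
    (hL2 : ∀ i ∈ I, MemLp (a i) 2 P) (hv : ∀ i ∈ I, ∫ ω, a i ω ^ 2 ∂P ≤ v) :
    variance (∑ i ∈ I, a i) P ≤ #I * v := by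
  rw [IndepFun.variance_sum hL2 hindep]
  calc ∑ i ∈ I, variance (a i) P ≤ ∑ _i ∈ I, v := sum_le_sum fun i hi =>
        (variance_le_expectation_sq (hL2 i hi).aestronglyMeasurable).trans (by simpa using hv i hi)
    _ = #I * v := by simp

lemma measure_two_mul_card_mul_sqrt_lt_sum_le
    (hindep : (I : Set ι).Pairwise fun i j => IndepFun (a i) (a j) P)
    (hL2 : ∀ i ∈ I, MemLp (a i) 2 P) (hv : ∀ i ∈ I, ∫ ω, a i ω ^ 2 ∂P ≤ v) :
    P {ω | 2 * #I * √v < ∑ i ∈ I, a i ω} ≤ (#I : ℝ≥0∞)⁻¹ := by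
  rcases le_or_gt v 0 with hv0 | hv0
  · -- Chebyshev needs a positive threshold; here every `a i` vanishes almost surely.
    have hzero : ∀ᵐ ω ∂P, ∀ i ∈ I, a i ω = 0 := (ae_ball_iff I.countable_toSet).mpr
      fun i hi => ae_eq_zero_of_integral_sq_nonpos (hL2 i hi) ((hv i hi).trans hv0)
    rw [measure_mono_null (fun ω hω hzero => ?_) (ae_iff.mp hzero)]
    · exact zero_le
    simp [sum_eq_zero hzero, Real.sqrt_eq_zero'.mpr hv0] at hω
  rcases I.eq_empty_or_nonempty with rfl | hI
  · simp
  set c := (#I : ℝ) * √v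
  have hc : 0 < c := by positivity
  have hsub : {ω | 2 * #I * √v < ∑ i ∈ I, a i ω}
      ⊆ {ω | c ≤ |(∑ i ∈ I, a i) ω - ∫ ω', (∑ i ∈ I, a i) ω' ∂P|} := by
    intro ω hω
    have hmean := integral_sum_le_card_mul_sqrt hL2 hv
    simp only [Set.mem_ofPred_eq, Finset.sum_apply] at hω hmean ⊢
    exact le_abs.mpr (Or.inl (by linarith))
  calc P {ω | 2 * #I * √v < ∑ i ∈ I, a i ω}
      ≤ ENNReal.ofReal (variance (∑ i ∈ I, a i) P / c ^ 2) :=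
        (measure_mono hsub).trans (meas_ge_le_variance_div_sq (memLp_finsetSum' I hL2) hc)
    _ ≤ ENNReal.ofReal (#I : ℝ)⁻¹ := by
        refine ENNReal.ofReal_le_ofReal ?_
        rw [div_le_iff₀ (by positivity), mul_pow, Real.sq_sqrt hv0.le]
        calc variance (∑ i ∈ I, a i) P ≤ #I * v := variance_sum_le_card_mul hindep hL2 hv
          _ = (#I : ℝ)⁻¹ * (#I ^ 2 * v) := by field_simp
    _ = (#I : ℝ≥0∞)⁻¹ := by
        rw [ENNReal.ofReal_inv_of_pos (by positivity), ENNReal.ofReal_natCast]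

end Probability

theorem stmt4_general {Ω : Type*} [MeasurableSpace Ω] (P : Measure Ω) [IsProbabilityMeasure P]
    (n d : ℕ) (hn : 0 < n)
    (X : Fin n → Ω → EuclideanSpace ℝ (Fin d))
    (μstar : EuclideanSpace ℝ (Fin d)) (Sigm : Fin n → Matrix (Fin d) (Fin d) ℝ)
    (hindep : iIndepFun X P)
    (hL2 : ∀ i, MemLp (X i) 2 P)
    (hcov : ∀ i, ∀ j k : Fin d,
      Sigm i j k = ∫ ω, (X i ω j - μstar j) * (X i ω k - μstar k) ∂P)
    (α : ℝ) (hα : 2 / 3 < α) (hα1 : α ≤ 1)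
    (κ : ℝ) (hκ : κ = 2 * (1 - α) / α) :
    κ < 1 ∧
    P {ω | ∀ μ : EuclideanSpace ℝ (Fin d), ∀ S : Finset (Fin n),
        S.card = ⌈α * (n : ℝ)⌉₊ →
        (∀ S' : Finset (Fin n), S'.card = ⌈α * (n : ℝ)⌉₊ →
          ∑ i ∈ S, ‖X i ω - μ‖ ^ 2 ≤ ∑ i ∈ S', ‖X i ω - μ‖ ^ 2) →
        ‖(⌈α * (n : ℝ)⌉₊ : ℝ)⁻¹ • (∑ i ∈ S, X i ω) - μstar‖
          ≤ κ * ‖μ - μstar‖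
            + 2 * Real.sqrt (d * orderStat (fun i => lambdaMax (Sigm i))
                ⟨⌈α * (n : ℝ)⌉₊ - 1, ceil_pred_lt α n hn hα1⟩)}
      ≥ 1 - 1 / (⌈α * (n : ℝ)⌉₊ : ℝ≥0∞) := by
  have hα0 : 0 < α := by linarith
  refine ⟨by rw [hκ, div_lt_one hα0]; linarith, ?_⟩
  set m := ⌈α * (n : ℝ)⌉₊
  set k : Fin n := ⟨m - 1, ceil_pred_lt α n hn hα1⟩
  set v := d * orderStat (fun i => lambdaMax (Sigm i)) k
  have hm : 0 < m := Nat.ceil_pos.mpr (by positivity)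
  obtain ⟨I, hIk, hI⟩ := exists_card_eq_forall_le_orderStat (fun i => lambdaMax (Sigm i)) k
  have hIm : #I = m := by simp only [hIk, k]; omega
  have hv (i : Fin n) (hi : i ∈ I) : ∫ ω, ‖X i ω - μstar‖ ^ 2 ∂P ≤ v := calc
    _ = (Sigm i).trace := integral_norm_sub_sq_eq_trace (hL2 i) μstar fun j => hcov i j j
    _ ≤ d * lambdaMax (Sigm i) :=
        (Matrix.isHermitian_of_eq_integral_mul (hcov i)).trace_le_mul_lambdaMax
    _ ≤ v := mul_le_mul_of_nonneg_left (hI i hi) d.cast_nonneg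
  have hmeas : Measurable fun x : EuclideanSpace ℝ (Fin d) => ‖x - μstar‖ := by fun_prop
  have hbad := measure_two_mul_card_mul_sqrt_lt_sum_le
    (fun i _ j _ hij => (hindep.indepFun hij).comp hmeas hmeas)
    (fun i _ => ((hL2 i).sub (memLp_const μstar)).norm) hv
  rw [hIm] at hbad
  rw [ge_iff_le, one_div]
  refine one_sub_le_measure_of_measure_compl_le
    ((measure_mono (Set.compl_subset_comm.mpr fun ω hω => ?_)).trans hbad)
  simp only [Set.mem_compl_iff, Set.mem_ofPred_eq, not_lt, Function.comp_apply] at hω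
  intro μ S hS hmin
  rw [hκ]
  exact norm_trimmedMean_sub_le_of_sum_le hα0 hm (by simpa using Nat.le_ceil (α * n)) hS hmin hIm hω

theorem stmt4 {Ω : Type*} [MeasurableSpace Ω] (P : Measure Ω) [IsProbabilityMeasure P]
    (n d : ℕ) (hn : 0 < n)
    (X : Fin n → Ω → EuclideanSpace ℝ (Fin d))
    (μstar : EuclideanSpace ℝ (Fin d)) (Sigm : Fin n → Matrix (Fin d) (Fin d) ℝ)
    (hindep : iIndepFun X P)
    (hL2 : ∀ i, MemLp (X i) 2 P)
    (hmean : ∀ i, ∫ ω, X i ω ∂P = μstar)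
    (hcov : ∀ i, ∀ j k : Fin d,
      Sigm i j k = ∫ ω, (X i ω j - μstar j) * (X i ω k - μstar k) ∂P)
    (α : ℝ) (hα : 2 / 3 < α) (hα1 : α ≤ 1)
    (κ : ℝ) (hκ : κ = 2 * (1 - α) / α) :
    κ < 1 ∧
    P {ω | ∀ μ : EuclideanSpace ℝ (Fin d), ∀ S : Finset (Fin n),
        S.card = ⌈α * (n : ℝ)⌉₊ →
        (∀ S' : Finset (Fin n), S'.card = ⌈α * (n : ℝ)⌉₊ →
          ∑ i ∈ S, ‖X i ω - μ‖ ^ 2 ≤ ∑ i ∈ S', ‖X i ω - μ‖ ^ 2) →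
        ‖(⌈α * (n : ℝ)⌉₊ : ℝ)⁻¹ • (∑ i ∈ S, X i ω) - μstar‖
          ≤ κ * ‖μ - μstar‖
            + 2 * Real.sqrt (d * orderStat (fun i => lambdaMax (Sigm i))
                ⟨⌈α * (n : ℝ)⌉₊ - 1, ceil_pred_lt α n hn hα1⟩)}
      ≥ 1 - 1 / (⌈α * (n : ℝ)⌉₊ : ℝ≥0∞) :=
  stmt4_general P n d hn X μstar Sigm hindep hL2 hcov α hα hα1 κ hκ
end

section
/- Let X ∈ ℝ^{n×d} have rows x_1ᵀ, …, x_nᵀ with ‖x_i‖₂ = 1 for all i, let β*, β ∈ ℝ^d, let y ∈ ℝ^n, and set ε = y − Xβ*. Let 1 ≤ m ≤ n and let S ⊆ {1,…,n} with |S| = m satisfy (y_i − x_iᵀβ)² ≤ (y_j − x_jᵀβ)² for every i ∈ S and j ∉ S (i.e., S consists of m samples with smallest squared residuals at β). Then for any subset S* ⊆ {1,…,n} with |S*| = m, it holds that ‖Σ_{i∈S\S*} ε_i x_i‖₂ ≤ Σ_{i∈S*\S} |ε_i| + 2·ψ⁺(|S \ S*|)·‖β − β*‖₂, where ψ⁺(k)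 := max_{T ⊆ {1,…,n}, |T|=k} λ_max(Σ_{i∈T} x_i x_iᵀ). -/
set_option autoImplicit false

open Finset

/-- The Gram matrix `∑_{i ∈ S} x_i x_iᵀ` of a subset of the sample points. -/
noncomputable def gramMatrix {n d : ℕ} (x : Fin n → EuclideanSpace ℝ (Fin d))
    (S : Finset (Fin n)) : Matrix (Fin d) (Fin d) ℝ :=
  ∑ i ∈ S, Matrix.of fun j k => x i j * x i k

/-- `ψ⁺(k)`: the maximum over all size-`k` subsets `S` of the largest eigenvalue
of `∑_{i ∈ S} x_i x_iᵀ`. -/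
noncomputable def psiPlus {n d : ℕ} (x : Fin n → EuclideanSpace ℝ (Fin d)) (k : ℕ) : ℝ :=
  sSup {r : ℝ | ∃ S : Finset (Fin n), S.card = k ∧ r = lambdaMax (gramMatrix x S)}

/-!
Put `A = S \ S*`, `B = S* \ S`, `Δ = β - β*`, `r i = y i - ⟪x i, β⟫` and
`w = ∑_{i ∈ A} ε i • x i`, so that `ε i = r i + ⟪x i, Δ⟫` and
`‖w‖² = ∑_{i ∈ A} r i ⟪x i, w⟫ + ∑_{i ∈ A} ⟪x i, Δ⟫ ⟪x i, w⟫`.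
As `|A| = |B|`, pair `A` with `B` by a bijection `e`; the trimming rule gives
`|r i| ≤ |r (e i)| ≤ |ε (e i)| + |⟪x (e i), Δ⟫|`. What remains are Cauchy–Schwarz products of
sums `∑_{i ∈ T} ⟪x i, u⟫²` over `k`-sets `T`, each the Rayleigh quotient of a Gram matrix and
hence at most `ψ⁺(k) ‖u‖²`. Altogether `‖w‖² ≤ ‖w‖ (∑_{j ∈ B} |ε j| + 2 ψ⁺(k) ‖Δ‖)`.
-/

open Module.End Matrix WithLp
open scoped RealInnerProductSpace

theorem EuclideanSpace.real_inner_eq_sum {ι : Type*} [Fintype ι] (u v : EuclideanSpace ℝ ι) :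
    ⟪u, v⟫ = ∑ j, u j * v j := by
  simp [PiLp.inner_apply, mul_comm]

theorem LinearMap.IsSymmetric.inner_map_self_le {E : Type*} [NormedAddCommGroup E]
    [InnerProductSpace ℝ E] [FiniteDimensional ℝ E] {T : E →ₗ[ℝ] E} (hT : T.IsSymmetric)
    {c : ℝ} (hc : ∀ μ, HasEigenvalue T μ → μ ≤ c) (u : E) : ⟪u, T u⟫ ≤ c * ‖u‖ ^ 2 := by
  set b := hT.eigenvectorBasis rfl
  have hb : ∀ i, ⟪b i, T u⟫ = hT.eigenvalues rfl i * ⟪b i, u⟫ := fun i => by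
    rw [← hT, hT.apply_eigenvectorBasis, real_inner_smul_left]; rfl
  calc ⟪u, T u⟫ = ∑ i, hT.eigenvalues rfl i * ⟪b i, u⟫ ^ 2 := by
        rw [← b.sum_inner_mul_inner]
        refine Finset.sum_congr rfl fun i _ => ?_
        rw [hb, real_inner_comm]; ring
    _ ≤ ∑ i, c * ⟪b i, u⟫ ^ 2 := by
        gcongr with i
        exact hc _ (hT.hasEigenvalue_eigenvalues rfl i)
    _ = c * ‖u‖ ^ 2 := by
        rw [← Finset.mul_sum, ← real_inner_self_eq_norm_sq, ← b.sum_inner_mul_inner]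
        simp_rw [real_inner_comm u, sq]

section residuals

variable {E ι : Type*} [NormedAddCommGroup E] [InnerProductSpace ℝ E]

theorem sum_mul_le_of_sum_sq_le {κ : Type*} {s : Finset κ} {f g : κ → ℝ} {P a b : ℝ}
    (hP : 0 ≤ P) (ha : 0 ≤ a) (hb : 0 ≤ b) (hf : ∑ i ∈ s, f i ^ 2 ≤ P * a ^ 2)
    (hg : ∑ i ∈ s, g i ^ 2 ≤ P * b ^ 2) : ∑ i ∈ s, f i * g i ≤ P * a * b := by
  refine le_of_abs_le (abs_le_of_sq_le_sq ?_ (by positivity))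
  calc (∑ i ∈ s, f i * g i) ^ 2 ≤ (∑ i ∈ s, f i ^ 2) * ∑ i ∈ s, g i ^ 2 :=
        s.sum_mul_sq_le_sq_mul_sq f g
    _ ≤ (P * a ^ 2) * (P * b ^ 2) := by gcongr
    _ = (P * a * b) ^ 2 := by ring

variable {x : ι → E} {Δ : E} {r ε : ι → ℝ} {A B : Finset ι} {P : ℝ}

theorem sum_mul_inner_le_of_abs_le (hx : ∀ i ∈ A, ‖x i‖ ≤ 1)
    (hε : ∀ i, ε i = r i + ⟪x i, Δ⟫) (hAB : A.card = B.card)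
    (hr : ∀ i ∈ A, ∀ j ∈ B, |r i| ≤ |r j|) (hP : 0 ≤ P)
    (hPA : ∀ u, ∑ i ∈ A, ⟪x i, u⟫ ^ 2 ≤ P * ‖u‖ ^ 2)
    (hPB : ∀ u, ∑ j ∈ B, ⟪x j, u⟫ ^ 2 ≤ P * ‖u‖ ^ 2) (v : E) :
    ∑ i ∈ A, r i * ⟪x i, v⟫ ≤ ‖v‖ * ∑ j ∈ B, |ε j| + P * ‖Δ‖ * ‖v‖ := by
  set e := A.equivOfCardEq hAB
  have sum_B : ∀ g : ι → ℝ, ∑ t : A, g (e t) = ∑ j ∈ B, g j := fun g =>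
    (e.sum_comp fun j => g j).trans (B.sum_coe_sort g)
  have pointwise (t : A) : r t * ⟪x t, v⟫ ≤ |ε (e t)| * ‖v‖ + |⟪x (e t), Δ⟫| * |⟪x t, v⟫| := by
    have hinner : |⟪x t, v⟫| ≤ ‖v‖ :=
      (abs_real_inner_le_norm _ _).trans (mul_le_of_le_one_left (norm_nonneg v) (hx t t.2))
    have hres : |r t| ≤ |ε (e t)| + |⟪x (e t), Δ⟫| := by
      refine (hr t t.2 (e t) (e t).2).trans ?_
      rw [show r (e t) = ε (e t) - ⟪x (e t), Δ⟫ by rw [hε]; ring]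
      exact abs_sub _ _
    calc r t * ⟪x t, v⟫ ≤ |r t| * |⟪x t, v⟫| := (le_abs_self _).trans (abs_mul _ _).le
      _ ≤ (|ε (e t)| + |⟪x (e t), Δ⟫|) * |⟪x t, v⟫| := by gcongr
      _ ≤ |ε (e t)| * ‖v‖ + |⟪x (e t), Δ⟫| * |⟪x t, v⟫| := by
        rw [add_mul]; gcongr
  calc ∑ i ∈ A, r i * ⟪x i, v⟫ = ∑ t : A, r t * ⟪x t, v⟫ := (A.sum_coe_sort _).symm
    _ ≤ ∑ t : A, (|ε (e t)| * ‖v‖ + |⟪x (e t), Δ⟫| * |⟪x t, v⟫|) :=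
      Finset.sum_le_sum fun t _ => pointwise t
    _ = ‖v‖ * ∑ j ∈ B, |ε j| + ∑ t : A, |⟪x (e t), Δ⟫| * |⟪x t, v⟫| := by
      rw [Finset.sum_add_distrib, ← Finset.sum_mul, sum_B fun j => |ε j|, mul_comm]
    _ ≤ ‖v‖ * ∑ j ∈ B, |ε j| + P * ‖Δ‖ * ‖v‖ := by
      gcongr
      refine sum_mul_le_of_sum_sq_le hP (norm_nonneg _) (norm_nonneg _) ?_ ?_
      · simpa only [sq_abs, sum_B fun j => ⟪x j, Δ⟫ ^ 2] using hPB Δ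
      · simpa only [sq_abs, A.sum_coe_sort fun i => ⟪x i, v⟫ ^ 2] using hPA v

theorem norm_sum_smul_le_of_abs_le (hx : ∀ i ∈ A, ‖x i‖ ≤ 1)
    (hε : ∀ i, ε i = r i + ⟪x i, Δ⟫) (hAB : A.card = B.card)
    (hr : ∀ i ∈ A, ∀ j ∈ B, |r i| ≤ |r j|) (hP : 0 ≤ P)
    (hPA : ∀ u, ∑ i ∈ A, ⟪x i, u⟫ ^ 2 ≤ P * ‖u‖ ^ 2)
    (hPB : ∀ u, ∑ j ∈ B, ⟪x j, u⟫ ^ 2 ≤ P * ‖u‖ ^ 2) :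
    ‖∑ i ∈ A, ε i • x i‖ ≤ ∑ j ∈ B, |ε j| + 2 * P * ‖Δ‖ := by
  obtain ⟨w, hw⟩ : ∃ w, w = ∑ i ∈ A, ε i • x i := ⟨_, rfl⟩
  rw [← hw]
  have hsplit : ‖w‖ ^ 2 = ∑ i ∈ A, r i * ⟪x i, w⟫ + ∑ i ∈ A, ⟪x i, Δ⟫ * ⟪x i, w⟫ := by
    rw [← real_inner_self_eq_norm_sq, ← Finset.sum_add_distrib]
    conv_lhs => rw [congrArg (⟪·, w⟫) hw]
    rw [sum_inner]
    refine Finset.sum_congr rfl fun i _ => ?_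
    rw [real_inner_smul_left, hε]; ring
  have h1 := sum_mul_inner_le_of_abs_le hx hε hAB hr hP hPA hPB w
  have h2 := sum_mul_le_of_sum_sq_le hP (norm_nonneg Δ) (norm_nonneg w) (hPA Δ) (hPA w)
  have : 0 ≤ ∑ j ∈ B, |ε j| + 2 * P * ‖Δ‖ := by positivity
  nlinarith [norm_nonneg w]

end residuals

section lambdaMax

variable {d : ℕ} (M : Matrix (Fin d) (Fin d) ℝ)

theorem hasEigenvalue_toEuclideanLin_iff {μ : ℝ} :
    HasEigenvalue (toEuclideanLin M) μ ↔ ∃ v : Fin d → ℝ, v ≠ 0 ∧ M *ᵥ v = μ • v := by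
  constructor
  · intro h
    obtain ⟨v, hv, hv0⟩ := h.exists_hasEigenvector
    refine ⟨ofLp v, by simpa using hv0, ?_⟩
    simpa using congr(ofLp $(mem_genEigenspace_one.mp hv))
  · rintro ⟨v, hv, hMv⟩
    refine hasEigenvalue_of_hasEigenvector (x := toLp 2 v) ⟨?_, by simpa using hv⟩
    rw [mem_genEigenspace_one]
    simp [hMv]

theorem lambdaMax_eq_sSup_hasEigenvalue :
    lambdaMax M = sSup {μ | HasEigenvalue (toEuclideanLin M) μ} := by
  simp only [lambdaMax, hasEigenvalue_toEuclideanLin_iff]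

theorem le_lambdaMax {μ : ℝ} (h : HasEigenvalue (toEuclideanLin M) μ) : μ ≤ lambdaMax M := by
  rw [lambdaMax_eq_sSup_hasEigenvalue]
  exact le_csSup (finite_hasEigenvalue _).bddAbove h

theorem lambdaMax_nonneg (hM : ∀ u, 0 ≤ ⟪u, toEuclideanLin M u⟫) : 0 ≤ lambdaMax M := by
  rw [lambdaMax_eq_sSup_hasEigenvalue]
  exact Real.sSup_nonneg fun μ hμ => eigenvalue_nonneg_of_nonneg hμ hM

theorem inner_toEuclideanLin_self_le_lambdaMax (hM : M.IsHermitian)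
    (u : EuclideanSpace ℝ (Fin d)) :
    ⟪u, toEuclideanLin M u⟫ ≤ lambdaMax M * ‖u‖ ^ 2 :=
  (isSymmetric_toEuclideanLin_iff.mpr hM).inner_map_self_le (fun _ => le_lambdaMax M) u

end lambdaMax

section gramMatrix

variable {n d : ℕ} (x : Fin n → EuclideanSpace ℝ (Fin d))

theorem toEuclideanLin_gramMatrix_apply (T : Finset (Fin n)) (u : EuclideanSpace ℝ (Fin d)) :
    toEuclideanLin (gramMatrix x T) u = ∑ i ∈ T, ⟪x i, u⟫ • x i := by
  ext j
  simp only [gramMatrix, map_sum, LinearMap.coe_sum, Finset.sum_apply, toLpLin_apply, ofLp_sum,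
    mulVec, dotProduct, of_apply, EuclideanSpace.real_inner_eq_sum, ofLp_smul, Pi.smul_apply,
    smul_eq_mul, sum_mul]
  exact Finset.sum_congr rfl fun i _ => Finset.sum_congr rfl fun l _ => by ring

theorem gramMatrix_isHermitian (T : Finset (Fin n)) : (gramMatrix x T).IsHermitian := by
  ext j k
  simp [gramMatrix, Matrix.sum_apply, mul_comm]

theorem inner_toEuclideanLin_gramMatrix_self (T : Finset (Fin n)) (u : EuclideanSpace ℝ (Fin d)) :
    ⟪u, toEuclideanLin (gramMatrix x T) u⟫ = ∑ i ∈ T, ⟪x i, u⟫ ^ 2 := by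
  simp only [toEuclideanLin_gramMatrix_apply, inner_sum, real_inner_smul_right, real_inner_comm u,
    sq]

theorem bddAbove_lambdaMax_gramMatrix (k : ℕ) :
    BddAbove {r : ℝ | ∃ S : Finset (Fin n), S.card = k ∧ r = lambdaMax (gramMatrix x S)} :=
  (Set.finite_range fun S => lambdaMax (gramMatrix x S)).bddAbove.mono <| by
    rintro _ ⟨S, -, rfl⟩
    exact ⟨S, rfl⟩

theorem psiPlus_nonneg (k : ℕ) : 0 ≤ psiPlus x k := by
  refine Real.sSup_nonneg ?_
  rintro _ ⟨S, -, rfl⟩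
  exact lambdaMax_nonneg _ fun u => by
    rw [inner_toEuclideanLin_gramMatrix_self]
    positivity

theorem sum_inner_sq_le_psiPlus {T : Finset (Fin n)} {k : ℕ} (hT : T.card = k)
    (u : EuclideanSpace ℝ (Fin d)) : ∑ i ∈ T, ⟪x i, u⟫ ^ 2 ≤ psiPlus x k * ‖u‖ ^ 2 := by
  rw [← inner_toEuclideanLin_gramMatrix_self]
  refine (inner_toEuclideanLin_self_le_lambdaMax _ (gramMatrix_isHermitian x T) u).trans ?_
  gcongr
  exact le_csSup (bddAbove_lambdaMax_gramMatrix x k) ⟨T, hT, rfl⟩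

end gramMatrix

theorem stmt13_general (n d : ℕ) (x : Fin n → EuclideanSpace ℝ (Fin d))
    (hx : ∀ i, ‖x i‖ = 1)
    (β βstar : EuclideanSpace ℝ (Fin d)) (y : Fin n → ℝ)
    (ε : Fin n → ℝ) (hε : ∀ i, ε i = y i - ∑ j, x i j * βstar j)
    (m : ℕ)
    (S : Finset (Fin n)) (hScard : S.card = m)
    (hsel : ∀ i ∈ S, ∀ j ∉ S,
      (y i - ∑ l, x i l * β l) ^ 2 ≤ (y j - ∑ l, x j l * β l) ^ 2)
    (Sstar : Finset (Fin n)) (hSstarcard : Sstar.card = m) :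
    ‖∑ i ∈ S \ Sstar, ε i • x i‖
      ≤ (∑ i ∈ Sstar \ S, |ε i|)
        + 2 * psiPlus x (S \ Sstar).card * ‖β - βstar‖ := by
  have hcard : (S \ Sstar).card = (Sstar \ S).card :=
    card_sdiff_comm (hScard.trans hSstarcard.symm)
  refine norm_sum_smul_le_of_abs_le (r := fun i => y i - ⟪x i, β⟫) (fun i _ => (hx i).le)
    (fun i => ?_) hcard (fun i hi j hj => ?_) (psiPlus_nonneg x _)
    (sum_inner_sq_le_psiPlus x rfl) (sum_inner_sq_le_psiPlus x hcard.symm)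
  · rw [hε, inner_sub_right, EuclideanSpace.real_inner_eq_sum, EuclideanSpace.real_inner_eq_sum]
    ring
  · rw [← sq_le_sq, EuclideanSpace.real_inner_eq_sum, EuclideanSpace.real_inner_eq_sum]
    exact hsel i (mem_sdiff.1 hi).1 j (mem_sdiff.1 hj).2

theorem stmt13 (n d : ℕ) (x : Fin n → EuclideanSpace ℝ (Fin d))
    (hx : ∀ i, ‖x i‖ = 1)
    (β βstar : EuclideanSpace ℝ (Fin d)) (y : Fin n → ℝ)
    (ε : Fin n → ℝ) (hε : ∀ i, ε i = y i - ∑ j, x i j * βstar j)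
    (m : ℕ) (hm : 1 ≤ m) (hmn : m ≤ n)
    (S : Finset (Fin n)) (hScard : S.card = m)
    (hsel : ∀ i ∈ S, ∀ j ∉ S,
      (y i - ∑ l, x i l * β l) ^ 2 ≤ (y j - ∑ l, x j l * β l) ^ 2)
    (Sstar : Finset (Fin n)) (hSstarcard : Sstar.card = m) :
    ‖∑ i ∈ S \ Sstar, ε i • x i‖
      ≤ (∑ i ∈ Sstar \ S, |ε i|)
        + 2 * psiPlus x (S \ Sstar).card * ‖β - βstar‖ :=
  stmt13_general n d x hx β βstar y ε hε m S hScard hsel Sstar hSstarcard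
end
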